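/- arXiv:math/0504046 — 7 statements merged into one kernel-verified Lean document; each statement's English description precedes it below -/
import Mathlib

section
/- A linear functional l on a Riesz space X is the sum of two Riesz homomorphisms if and only if l is a positive functional whose kernel is a Grothendieck subspace of X. -/
/-!
If `l = f + g` with Riesz homomorphisms `f, g`, then `g = -f` on `ker l`, and a Riesz
homomorphism commutes with `(x, y) ↦ x ⊔ y ⊔ 0 + x ⊓ y ⊓ 0`, which is odd on `ℝ`; so `ker l`
is a G-space.

Conversely, if `ker l` is a G-space, then `l` cannot charge three pairwise disjoint positive
elements: normalised to `l a = l b = l c = 1`, they would put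
`(a - b) ⊔ (c - b) ⊔ 0 + (a - b) ⊓ (c - b) ⊓ 0 = a + c - b` into the kernel. If `l` never charges
two disjoint positive elements, it is itself a Riesz homomorphism. Otherwise pick disjoint
`a, b ≥ 0` charged by `l`, and split `l` into `f x = ⨆ t, l (x ⊓ t • a)` (its restriction to the
band generated by `a`) and `g = l - f`. A disjoint pair charged by `f` yields, together with `b`,
three disjoint elements charged by `l`; for a disjoint pair `u, v` charged by `g` the third one
is `(t • a - (u + v))⁺` with `t` large.
-/

variable {X : Type*} [Lattice X] [AddCommGroup X]
  [CovariantClass X X (· + ·) (· ≤ ·)] [Module ℝ X] [PosSMulMono ℝ X]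

/-- A Grothendieck subspace: closed under `x ⊔ y ⊔ 0 + x ⊓ y ⊓ 0`. -/
def IsGrothendieckSubspace (H : Submodule ℝ X) : Prop :=
  ∀ x ∈ H, ∀ y ∈ H, x ⊔ y ⊔ 0 + x ⊓ y ⊓ 0 ∈ H

/-- A Riesz subspace: closed under the lattice operations. -/
def IsRieszSubspace (H : Submodule ℝ X) : Prop :=
  ∀ x ∈ H, ∀ y ∈ H, x ⊔ y ∈ H ∧ x ⊓ y ∈ H

/-- A Riesz homomorphism: a linear map preserving finite suprema. -/
def IsRieszHom (f : X →ₗ[ℝ] ℝ) : Prop :=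
  ∀ x y : X, f (x ⊔ y) = f x ⊔ f y

/-- A positive linear functional. -/
def IsPositive (f : X →ₗ[ℝ] ℝ) : Prop :=
  ∀ x : X, 0 ≤ x → 0 ≤ f x

/-- `p` is the positive part of the order bounded functional `l`
(so `l₋ = p - l` and `|l| = p + (p - l)`). -/
def IsPosPartOf (l p : X →ₗ[ℝ] ℝ) : Prop :=
  IsPositive p ∧ IsPositive (p - l) ∧
    ∀ x : X, 0 ≤ x → p x = sSup {r : ℝ | ∃ y : X, 0 ≤ y ∧ y ≤ x ∧ l y = r}

section LatticeOrderedGroup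

theorem inf_eq_zero_of_le_of_le {α : Type*} [Lattice α] [Zero α] {p q r s : α} (hp : 0 ≤ p)
    (hr : 0 ≤ r) (hpq : p ≤ q) (hrs : r ≤ s) (hqs : q ⊓ s = 0) : p ⊓ r = 0 :=
  le_antisymm (hqs ▸ inf_le_inf hpq hrs) (le_inf hp hr)

variable {α : Type*} [Lattice α] [AddCommGroup α] [AddLeftMono α] {a b c : α}

theorem add_inf_le_inf_add_inf (ha : 0 ≤ a) (hb : 0 ≤ b) (hc : 0 ≤ c) :
    (a + b) ⊓ c ≤ a ⊓ c + b ⊓ c := by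
  rw [inf_add, add_inf, add_inf]
  exact le_inf (le_inf inf_le_left (inf_le_right.trans (le_add_of_nonneg_left ha)))
    (le_inf (inf_le_right.trans (le_add_of_nonneg_right hb))
      (inf_le_right.trans (le_add_of_nonneg_left hc)))

theorem add_inf_eq_zero (ha : 0 ≤ a) (hb : 0 ≤ b) (hc : 0 ≤ c) (hac : a ⊓ c = 0)
    (hbc : b ⊓ c = 0) : (a + b) ⊓ c = 0 :=
  le_antisymm (by simpa [hac, hbc] using add_inf_le_inf_add_inf ha hb hc)
    (le_inf (add_nonneg ha hb) hc)

theorem posPart_sub_eq_self_of_inf_eq_zero (h : a ⊓ b = 0) : (a - b)⁺ = a := by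
  have := inf_eq_sub_posPart_sub a b
  rw [h] at this
  exact (sub_eq_zero.1 this.symm).symm

theorem grothendieck_combination_of_disjoint (ha : 0 ≤ a) (hb : 0 ≤ b) (hc : 0 ≤ c)
    (hab : a ⊓ b = 0) (hbc : b ⊓ c = 0) (hac : a ⊓ c = 0) :
    (a - b) ⊔ (c - b) ⊔ 0 + (a - b) ⊓ (c - b) ⊓ 0 = a + c - b := by
  have hsup : a ⊔ c = a + c := by simpa [hac] using inf_add_sup a c
  have hdisj : (a + c) ⊓ b = 0 := add_inf_eq_zero ha hc hb hab (inf_comm b c ▸ hbc)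
  rw [← sup_sub, ← inf_sub, hsup, hac, zero_sub, ← posPart_def,
    posPart_sub_eq_self_of_inf_eq_zero hdisj, inf_eq_left.2 (neg_nonpos.2 hb), sub_eq_add_neg]

end LatticeOrderedGroup

section RieszSpace

theorem smul_inf_of_pos {E : Type*} [Lattice E] [AddCommGroup E] [Module ℝ E] [PosSMulMono ℝ E]
    {s : ℝ} (hs : 0 < s) (x y : E) : s • (x ⊓ y) = s • x ⊓ s • y :=
  (OrderIso.smulRight hs).map_inf x y

variable {E : Type*} [Lattice E] [AddCommGroup E] [AddLeftMono E] [Module ℝ E] [PosSMulMono ℝ E]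

theorem smul_le_smul_of_le_of_nonneg {s t : ℝ} {a : E} (hst : s ≤ t) (ha : 0 ≤ a) :
    s • a ≤ t • a :=
  sub_nonneg.1 (by rw [← sub_smul]; exact smul_nonneg (sub_nonneg.2 hst) ha)

theorem smul_inf_eq_zero {s : ℝ} {a b : E} (hs : 0 ≤ s) (ha : 0 ≤ a) (hb : 0 ≤ b)
    (hab : a ⊓ b = 0) : s • a ⊓ b = 0 := by
  have hm : (0 : ℝ) < s + 1 := by linarith
  refine le_antisymm ?_ (le_inf (smul_nonneg hs ha) hb)
  calc s • a ⊓ b ≤ (s + 1) • a ⊓ (s + 1) • b :=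
        inf_le_inf (smul_le_smul_of_le_of_nonneg (by linarith) ha)
          (by simpa using smul_le_smul_of_le_of_nonneg (by linarith : (1 : ℝ) ≤ s + 1) hb)
    _ = 0 := by rw [← smul_inf_of_pos hm, hab, smul_zero]

theorem smul_inf_smul_eq_zero {s t : ℝ} {a b : E} (hs : 0 ≤ s) (ht : 0 ≤ t) (ha : 0 ≤ a)
    (hb : 0 ≤ b) (hab : a ⊓ b = 0) : s • a ⊓ t • b = 0 := by
  rw [inf_comm]
  exact smul_inf_eq_zero ht hb (smul_nonneg hs ha)
    (by rw [inf_comm]; exact smul_inf_eq_zero hs ha hb hab)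

end RieszSpace

section Functionals

variable {E : Type*} [Lattice E] [AddCommGroup E] [Module ℝ E] {f g l : E →ₗ[ℝ] ℝ}

theorem IsPositive.add (hf : IsPositive f) (hg : IsPositive g) : IsPositive (f + g) :=
  fun x hx => add_nonneg (hf x hx) (hg x hx)

theorem IsRieszHom.isPositive (hf : IsRieszHom f) : IsPositive f := fun x hx => by
  have h := hf x 0
  rw [sup_eq_left.2 hx, map_zero] at h
  exact h ▸ le_sup_right

variable [AddLeftMono E]

theorem IsPositive.monotone (hl : IsPositive l) : Monotone l := fun x y hxy => by
  simpa using hl (y - x) (sub_nonneg.2 hxy)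

theorem IsRieszHom.map_inf (hf : IsRieszHom f) (x y : E) : f (x ⊓ y) = f x ⊓ f y := by
  have h := congrArg f (inf_add_sup x y)
  rw [map_add, map_add, hf] at h
  linarith [inf_add_sup (f x) (f y)]

theorem IsRieszHom.map_grothendieck (hf : IsRieszHom f) (x y : E) :
    f (x ⊔ y ⊔ 0 + x ⊓ y ⊓ 0) = f x ⊔ f y ⊔ 0 + f x ⊓ f y ⊓ 0 := by
  rw [map_add, hf, hf, hf.map_inf, hf.map_inf, map_zero]

theorem isGrothendieckSubspace_ker_add (hf : IsRieszHom f) (hg : IsRieszHom g) :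
    IsGrothendieckSubspace (LinearMap.ker (f + g)) := by
  intro x hx y hy
  rw [LinearMap.mem_ker, LinearMap.add_apply] at hx hy ⊢
  have hodd (s t : ℝ) : -s ⊔ -t ⊔ 0 + -s ⊓ -t ⊓ 0 = -(s ⊔ t ⊔ 0 + s ⊓ t ⊓ 0) := by
    rw [neg_add, neg_sup, neg_sup, neg_inf, neg_inf, neg_zero, add_comm]
  rw [hf.map_grothendieck, hg.map_grothendieck, eq_neg_of_add_eq_zero_right hx,
    eq_neg_of_add_eq_zero_right hy, hodd, add_neg_cancel]

theorem IsRieszHom.of_map_posPart (h : ∀ z, f z⁺ = (f z)⁺) : IsRieszHom f := fun x y => by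
  rw [sup_eq_add_posPart_sub, map_add, h, map_sub, ← sup_eq_add_posPart_sub]

theorem IsRieszHom.of_disjoint (hf : IsPositive f)
    (h : ∀ u v : E, 0 ≤ u → 0 ≤ v → u ⊓ v = 0 → f u = 0 ∨ f v = 0) : IsRieszHom f := by
  refine .of_map_posPart fun z => ?_
  have hz : f z = f z⁺ - f z⁻ := by rw [← map_sub, posPart_sub_negPart]
  rcases h _ _ (posPart_nonneg z) (negPart_nonneg z) (posPart_inf_negPart_eq_zero z) with h0 | h0
  · rw [h0, posPart_eq_zero.2 (by linarith [hf _ (negPart_nonneg z)])]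
  · rw [hz, h0, sub_zero, posPart_eq_self.2 (hf _ (posPart_nonneg z))]

end Functionals

section PosCone

variable {E : Type*} [Lattice E] [AddCommGroup E] [AddLeftMono E] (P : E → ℝ)
  (hadd : ∀ x y : E, 0 ≤ x → 0 ≤ y → P (x + y) = P x + P y)

include hadd in
theorem map_posPart_sub_map_negPart {p q : E} (hp : 0 ≤ p) (hq : 0 ≤ q) :
    P (p - q)⁺ - P (p - q)⁻ = P p - P q := by
  have h : (p - q)⁺ + q = p + (p - q)⁻ := by
    rw [← sub_eq_sub_iff_add_eq_add, posPart_sub_negPart]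
  have := congrArg P h
  rw [hadd _ _ (posPart_nonneg _) hq, hadd _ _ hp (negPart_nonneg _)] at this
  linarith

variable [Module ℝ E] [PosSMulMono ℝ E]
  (hsmul : ∀ s : ℝ, 0 < s → ∀ x : E, 0 ≤ x → P (s • x) = s * P x)

noncomputable def linearMapOfPosCone : E →ₗ[ℝ] ℝ where
  toFun x := P x⁺ - P x⁻
  map_add' x y := by
    have h : x⁺ + y⁺ - (x⁻ + y⁻) = x + y := by
      rw [add_sub_add_comm, posPart_sub_negPart, posPart_sub_negPart]
    rw [← h, map_posPart_sub_map_negPart P hadd (add_nonneg (posPart_nonneg x) (posPart_nonneg y))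
      (add_nonneg (negPart_nonneg x) (negPart_nonneg y)), hadd _ _ (posPart_nonneg x)
      (posPart_nonneg y), hadd _ _ (negPart_nonneg x) (negPart_nonneg y)]
    ring
  map_smul' s x := by
    simp only [RingHom.id_apply, smul_eq_mul]
    rcases lt_trichotomy s 0 with hs | rfl | hs
    · have h : (-s) • x⁻ - (-s) • x⁺ = s • x := by
        rw [← smul_sub, ← neg_sub, posPart_sub_negPart, smul_neg, neg_smul, neg_neg]
      rw [← h, map_posPart_sub_map_negPart P hadd (smul_nonneg (by linarith) (negPart_nonneg x))
        (smul_nonneg (by linarith) (posPart_nonneg x)), hsmul _ (by linarith) _ (negPart_nonneg x),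
        hsmul _ (by linarith) _ (posPart_nonneg x)]
      ring
    · simp
    · have h : s • x⁺ - s • x⁻ = s • x := by rw [← smul_sub, posPart_sub_negPart]
      rw [← h, map_posPart_sub_map_negPart P hadd (smul_nonneg hs.le (posPart_nonneg x))
        (smul_nonneg hs.le (negPart_nonneg x)), hsmul _ hs _ (posPart_nonneg x),
        hsmul _ hs _ (negPart_nonneg x)]
      ring

theorem linearMapOfPosCone_apply_of_nonneg {x : E} (hx : 0 ≤ x) :
    linearMapOfPosCone P hadd hsmul x = P x := by
  have h0 : P 0 = 0 := by
    have := hadd 0 0 le_rfl le_rfl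
    rw [add_zero] at this
    linarith
  change P x⁺ - P x⁻ = P x
  simpa [h0] using map_posPart_sub_map_negPart P hadd hx le_rfl

end PosCone

section Grothendieck

variable {E : Type*} [Lattice E] [AddCommGroup E] [AddLeftMono E] [Module ℝ E] {l : E →ₗ[ℝ] ℝ}
  {a b c : E}

theorem false_of_three_disjoint_of_map_eq_one (hG : IsGrothendieckSubspace (LinearMap.ker l))
    (ha : 0 ≤ a) (hb : 0 ≤ b) (hc : 0 ≤ c) (hab : a ⊓ b = 0) (hbc : b ⊓ c = 0) (hac : a ⊓ c = 0)
    (hla : l a = 1) (hlb : l b = 1) (hlc : l c = 1) : False := by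
  have hx : a - b ∈ LinearMap.ker l := by simp [hla, hlb]
  have hy : c - b ∈ LinearMap.ker l := by simp [hlc, hlb]
  have h := hG _ hx _ hy
  rw [grothendieck_combination_of_disjoint ha hb hc hab hbc hac, LinearMap.mem_ker, map_sub,
    map_add, hla, hlb, hlc] at h
  norm_num at h

theorem false_of_three_disjoint_of_map_pos [PosSMulMono ℝ E]
    (hG : IsGrothendieckSubspace (LinearMap.ker l))
    (ha : 0 ≤ a) (hb : 0 ≤ b) (hc : 0 ≤ c) (hab : a ⊓ b = 0) (hbc : b ⊓ c = 0) (hac : a ⊓ c = 0)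
    (hla : 0 < l a) (hlb : 0 < l b) (hlc : 0 < l c) : False := by
  have hinv {d : E} (hld : 0 < l d) : l ((l d)⁻¹ • d) = 1 := by simp [hld.ne']
  have ha' := inv_nonneg.2 hla.le
  have hb' := inv_nonneg.2 hlb.le
  have hc' := inv_nonneg.2 hlc.le
  exact false_of_three_disjoint_of_map_eq_one hG (smul_nonneg ha' ha) (smul_nonneg hb' hb)
    (smul_nonneg hc' hc) (smul_inf_smul_eq_zero ha' hb' ha hb hab)
    (smul_inf_smul_eq_zero hb' hc' hb hc hbc) (smul_inf_smul_eq_zero ha' hc' ha hc hac)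
    (hinv hla) (hinv hlb) (hinv hlc)

end Grothendieck

section BandRestriction

variable {E : Type*} [Lattice E] [AddCommGroup E] [Module ℝ E] {l : E →ₗ[ℝ] ℝ} {a : E}

/-- For `x ≥ 0`, the mass that `l` gives to the component of `x` in the band generated by `a`;
off the positive cone this has no such meaning and is not additive. -/
noncomputable def bandRestrictionFun (l : E →ₗ[ℝ] ℝ) (a x : E) : ℝ :=
  ⨆ t : ℝ, l (x ⊓ t • a)

theorem bandRestrictionFun_smul [PosSMulMono ℝ E] {s : ℝ} (hs : 0 < s) (x : E) :
    bandRestrictionFun l a (s • x) = s * bandRestrictionFun l a x :=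
  calc ⨆ t : ℝ, l (s • x ⊓ t • a) = ⨆ t : ℝ, l (s • x ⊓ (s * t) • a) :=
        ((mul_left_surjective₀ hs.ne').iSup_comp fun t => l (s • x ⊓ t • a)).symm
    _ = ⨆ t : ℝ, s * l (x ⊓ t • a) := by
        simp_rw [mul_smul, ← smul_inf_of_pos hs, map_smul, smul_eq_mul]
    _ = s * bandRestrictionFun l a x := (Real.mul_iSup_of_nonneg hs.le _).symm

variable [AddLeftMono E]

theorem IsPositive.bddAbove_range_map_inf (hl : IsPositive l) (a x : E) :
    BddAbove (Set.range fun t : ℝ => l (x ⊓ t • a)) :=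
  ⟨l x, by rintro _ ⟨t, rfl⟩; exact hl.monotone inf_le_left⟩

theorem map_inf_smul_le_bandRestrictionFun (hl : IsPositive l) (x : E) (t : ℝ) :
    l (x ⊓ t • a) ≤ bandRestrictionFun l a x :=
  le_ciSup (hl.bddAbove_range_map_inf a x) t

theorem bandRestrictionFun_le (hl : IsPositive l) (x : E) : bandRestrictionFun l a x ≤ l x :=
  ciSup_le fun _ => hl.monotone inf_le_left

theorem bandRestrictionFun_nonneg (hl : IsPositive l) {x : E} (hx : 0 ≤ x) :
    0 ≤ bandRestrictionFun l a x := by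
  simpa [inf_eq_right.2 hx] using map_inf_smul_le_bandRestrictionFun (a := a) hl x 0

theorem map_sub_bandRestrictionFun_le (hl : IsPositive l) (x : E) (t : ℝ) :
    l x - bandRestrictionFun l a x ≤ l (x - t • a)⁺ := by
  have := map_inf_smul_le_bandRestrictionFun (a := a) hl x t
  rw [inf_eq_sub_posPart_sub, map_sub] at this
  linarith

variable [PosSMulMono ℝ E]

theorem bandRestrictionFun_add (hl : IsPositive l) (ha : 0 ≤ a) {x y : E} (hx : 0 ≤ x)
    (hy : 0 ≤ y) :
    bandRestrictionFun l a (x + y) = bandRestrictionFun l a x + bandRestrictionFun l a y := by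
  refine le_antisymm (ciSup_le fun t => ?_) (ciSup_add_ciSup_le fun t s => ?_)
  · calc l ((x + y) ⊓ t • a) ≤ l ((x + y) ⊓ |t| • a) :=
          hl.monotone (inf_le_inf_left _ (smul_le_smul_of_le_of_nonneg (le_abs_self t) ha))
      _ ≤ l (x ⊓ |t| • a + y ⊓ |t| • a) :=
          hl.monotone (add_inf_le_inf_add_inf hx hy (smul_nonneg (abs_nonneg t) ha))
      _ ≤ bandRestrictionFun l a x + bandRestrictionFun l a y := by
          rw [map_add]
          exact add_le_add (map_inf_smul_le_bandRestrictionFun hl x _)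
            (map_inf_smul_le_bandRestrictionFun hl y _)
  · calc l (x ⊓ t • a) + l (y ⊓ s • a) = l (x ⊓ t • a + y ⊓ s • a) := (map_add _ _ _).symm
      _ ≤ l ((x + y) ⊓ (t + s) • a) := hl.monotone <| by
          rw [add_smul]
          exact le_inf (add_le_add inf_le_left inf_le_left) (add_le_add inf_le_right inf_le_right)
      _ ≤ bandRestrictionFun l a (x + y) := map_inf_smul_le_bandRestrictionFun hl _ _

noncomputable def bandRestriction (hl : IsPositive l) (ha : 0 ≤ a) : E →ₗ[ℝ] ℝ :=
  linearMapOfPosCone (bandRestrictionFun l a) (fun _ _ => bandRestrictionFun_add hl ha)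
    fun _ hs x _ => bandRestrictionFun_smul hs x

theorem bandRestriction_apply (hl : IsPositive l) (ha : 0 ≤ a) {x : E} (hx : 0 ≤ x) :
    bandRestriction hl ha x = bandRestrictionFun l a x :=
  linearMapOfPosCone_apply_of_nonneg _ _ _ hx

theorem isPositive_bandRestriction (hl : IsPositive l) (ha : 0 ≤ a) :
    IsPositive (bandRestriction hl ha) := fun _ hx =>
  bandRestriction_apply hl ha hx ▸ bandRestrictionFun_nonneg hl hx

theorem isPositive_sub_bandRestriction (hl : IsPositive l) (ha : 0 ≤ a) :
    IsPositive (l - bandRestriction hl ha) := fun x hx => by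
  simpa [bandRestriction_apply hl ha hx] using bandRestrictionFun_le hl x

theorem exists_map_inf_smul_pos (hl : IsPositive l) (ha : 0 ≤ a) {x : E}
    (h : 0 < bandRestrictionFun l a x) :
    ∃ t : ℝ, 0 ≤ t ∧ 0 < l (x ⊓ t • a) := by
  obtain ⟨t, ht⟩ := exists_lt_of_lt_ciSup h
  exact ⟨|t|, abs_nonneg t, ht.trans_le
    (hl.monotone (inf_le_inf_left x (smul_le_smul_of_le_of_nonneg (le_abs_self t) ha)))⟩

theorem isRieszHom_bandRestriction (hl : IsPositive l) (ha : 0 ≤ a)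
    (hG : IsGrothendieckSubspace (LinearMap.ker l)) {b : E} (hb : 0 ≤ b) (hab : a ⊓ b = 0)
    (hlb : 0 < l b) : IsRieszHom (bandRestriction hl ha) := by
  refine .of_disjoint (isPositive_bandRestriction hl ha) fun u v hu hv huv => ?_
  rw [bandRestriction_apply hl ha hu, bandRestriction_apply hl ha hv]
  by_contra! h
  obtain ⟨s, hs, hus⟩ :=
    exists_map_inf_smul_pos hl ha ((bandRestrictionFun_nonneg hl hu).lt_of_ne' h.1)
  obtain ⟨t, ht, hvt⟩ :=
    exists_map_inf_smul_pos hl ha ((bandRestrictionFun_nonneg hl hv).lt_of_ne' h.2)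
  have hus₀ : 0 ≤ u ⊓ s • a := le_inf hu (smul_nonneg hs ha)
  have hvt₀ : 0 ≤ v ⊓ t • a := le_inf hv (smul_nonneg ht ha)
  exact false_of_three_disjoint_of_map_pos hG hus₀ hvt₀ hb
    (inf_eq_zero_of_le_of_le hus₀ hvt₀ inf_le_left inf_le_left huv)
    (inf_eq_zero_of_le_of_le hvt₀ hb inf_le_right le_rfl (smul_inf_eq_zero ht ha hb hab))
    (inf_eq_zero_of_le_of_le hus₀ hb inf_le_right le_rfl (smul_inf_eq_zero hs ha hb hab))
    hus hvt hlb

theorem isRieszHom_sub_bandRestriction (hl : IsPositive l) (ha : 0 ≤ a)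
    (hG : IsGrothendieckSubspace (LinearMap.ker l)) (hla : 0 < l a) :
    IsRieszHom (l - bandRestriction hl ha) := by
  refine .of_disjoint (isPositive_sub_bandRestriction hl ha) fun u v hu hv huv => ?_
  simp only [LinearMap.sub_apply, bandRestriction_apply hl ha hu, bandRestriction_apply hl ha hv]
  by_contra! h
  obtain ⟨t, ht, hlt⟩ : ∃ t : ℝ, 0 ≤ t ∧ l (u + v) < t * l a :=
    ⟨(l (u + v) + 1) / l a, div_nonneg (by linarith [hl _ (add_nonneg hu hv)]) hla.le,
      by rw [div_mul_cancel₀ _ hla.ne']; linarith⟩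
  have hta : 0 ≤ t • a := smul_nonneg ht ha
  have hpos {w : E} (hw : l w - bandRestrictionFun l a w ≠ 0) : 0 < l (w - t • a)⁺ :=
    ((sub_nonneg.2 (bandRestrictionFun_le hl w)).lt_of_ne' hw).trans_le
      (map_sub_bandRestrictionFun_le hl w t)
  have hle {w : E} (hw : 0 ≤ w) : (w - t • a)⁺ ≤ w :=
    (posPart_mono (sub_le_self w hta)).trans (posPart_eq_self.2 hw).le
  have hdisj {w : E} (hw : w ≤ u + v) : (w - t • a)⁺ ⊓ (t • a - (u + v))⁺ = 0 := by
    refine inf_eq_zero_of_le_of_le (posPart_nonneg _) (posPart_nonneg _) le_rfl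
      (posPart_mono (sub_le_sub_left hw (t • a))) ?_
    show (w - t • a)⁺ ⊓ (t • a - w)⁺ = 0
    rw [← neg_sub w (t • a), posPart_neg]
    exact posPart_inf_negPart_eq_zero _
  have hrest : 0 < l (t • a - (u + v))⁺ := by
    have := hl.monotone (le_posPart (t • a - (u + v)))
    rw [map_sub, map_smul, smul_eq_mul] at this
    linarith
  exact false_of_three_disjoint_of_map_pos hG (posPart_nonneg _) (posPart_nonneg _)
    (posPart_nonneg _)
    (inf_eq_zero_of_le_of_le (posPart_nonneg _) (posPart_nonneg _) (hle hu) (hle hv) huv)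
    (hdisj (le_add_of_nonneg_left hu)) (hdisj (le_add_of_nonneg_right hv))
    (hpos h.1) (hpos h.2) hrest

end BandRestriction

theorem sum_of_two_riesz_homs_iff (l : X →ₗ[ℝ] ℝ) :
    (∃ f g : X →ₗ[ℝ] ℝ, IsRieszHom f ∧ IsRieszHom g ∧ l = f + g) ↔
      IsPositive l ∧ IsGrothendieckSubspace (LinearMap.ker l) := by
  constructor
  · rintro ⟨f, g, hf, hg, rfl⟩
    exact ⟨hf.isPositive.add hg.isPositive, isGrothendieckSubspace_ker_add hf hg⟩
  rintro ⟨hl, hG⟩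
  by_cases h : ∀ u v : X, 0 ≤ u → 0 ≤ v → u ⊓ v = 0 → l u = 0 ∨ l v = 0
  · exact ⟨l, 0, .of_disjoint hl h, fun _ _ => by simp, (add_zero l).symm⟩
  push Not at h
  obtain ⟨a, b, ha, hb, hab, hla, hlb⟩ := h
  exact ⟨bandRestriction hl ha, l - bandRestriction hl ha,
    isRieszHom_bandRestriction hl ha hG hb hab ((hl b hb).lt_of_ne' hlb),
    isRieszHom_sub_bandRestriction hl ha hG ((hl a ha).lt_of_ne' hla), (add_sub_cancel _ _).symm⟩
end

section
/- Let l be an order bounded linear functional on a Riesz space X with l₊ ≠ 0 and l₋ ≠ 0. Then the kernel of l is a Grothendieck subspace of X if and only if the kernel of l is a Riesz subspace of X. -/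
/-!
The hypotheses `l₊ ≠ 0` and `l₋ ≠ 0` give positive elements `a`, `c` with `l a > 0 > l c`;
adding a suitable positive multiple of `a` or `c` to any `w` lands in `ker l` above `w`,
so `ker l` is majorizing. For a majorizing subspace `H` and `x, y ∈ H`, pick `z ∈ H` with
`z ≥ -(x ⊓ y)`: then `x + z, y + z ≥ 0`, so the Grothendieck operation applied to them is
just `x ⊔ y + z`, and `x ⊓ y = x + y - x ⊔ y`.
-/

variable {X : Type*} [Lattice X] [AddCommGroup X]
  [CovariantClass X X (· + ·) (· ≤ ·)] [Module ℝ X] [PosSMulMono ℝ X]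

def IsMajorizing (H : Submodule ℝ X) : Prop :=
  ∀ w : X, ∃ z ∈ H, w ≤ z

section Subspaces

variable {H : Submodule ℝ X}

omit [CovariantClass X X (· + ·) (· ≤ ·)] [PosSMulMono ℝ X] in
theorem IsRieszSubspace.isGrothendieckSubspace (hH : IsRieszSubspace H) :
    IsGrothendieckSubspace H := fun x hx y hy =>
  H.add_mem (hH _ (hH x hx y hy).1 0 H.zero_mem).1 (hH _ (hH x hx y hy).2 0 H.zero_mem).2

omit [PosSMulMono ℝ X] in
theorem IsGrothendieckSubspace.isRieszSubspace (hG : IsGrothendieckSubspace H)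
    (hM : IsMajorizing H) : IsRieszSubspace H := by
  intro x hx y hy
  obtain ⟨z, hz, hzm⟩ := hM (-(x ⊓ y))
  have hinf : 0 ≤ x ⊓ y + z := by simpa using add_le_add_right hzm (x ⊓ y)
  have hsup : 0 ≤ x ⊔ y + z := hinf.trans (add_le_add_left inf_le_sup z)
  have key := hG _ (H.add_mem hx hz) _ (H.add_mem hy hz)
  rw [← sup_add, ← inf_add, sup_eq_left.mpr hsup, inf_eq_right.mpr hinf, add_zero] at key
  have hxy : x ⊔ y ∈ H := by simpa using H.sub_mem key hz
  refine ⟨hxy, ?_⟩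
  have hdecomp : x ⊓ y = x + y - x ⊔ y := by rw [← inf_add_sup x y, add_sub_cancel_right]
  exact hdecomp ▸ H.sub_mem (H.add_mem hx hy) hxy

end Subspaces

section Functionals

variable {l p : X →ₗ[ℝ] ℝ}

omit [PosSMulMono ℝ X] in
theorem IsPositive.exists_pos_apply (hp : IsPositive p) (hp0 : p ≠ 0) :
    ∃ x : X, 0 ≤ x ∧ 0 < p x := by
  by_contra! h
  refine hp0 (LinearMap.ext fun x => ?_)
  have hpos : p x⁺ = 0 := (h _ (posPart_nonneg x)).antisymm (hp _ (posPart_nonneg x))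
  have hneg : p x⁻ = 0 := (h _ (negPart_nonneg x)).antisymm (hp _ (negPart_nonneg x))
  rw [← posPart_sub_negPart x, map_sub, hpos, hneg, sub_zero, LinearMap.zero_apply]

omit [PosSMulMono ℝ X] in
theorem IsPosPartOf.exists_pos_apply (hp : IsPosPartOf l p) (hp0 : p ≠ 0) :
    ∃ a : X, 0 ≤ a ∧ 0 < l a := by
  obtain ⟨u, hu, hpu⟩ := hp.1.exists_pos_apply hp0
  rw [hp.2.2 u hu] at hpu
  obtain ⟨_, ⟨a, ha, -, rfl⟩, hla⟩ :=
    exists_lt_of_lt_csSup (by exact ⟨0, 0, le_rfl, hu, map_zero l⟩) hpu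
  exact ⟨a, ha, hla⟩

omit [PosSMulMono ℝ X] in
theorem IsPosPartOf.exists_neg_apply (hp : IsPosPartOf l p) (hn0 : p - l ≠ 0) :
    ∃ c : X, 0 ≤ c ∧ l c < 0 := by
  obtain ⟨u, hu, hqu⟩ := hp.2.1.exists_pos_apply hn0
  rw [LinearMap.sub_apply, sub_pos, hp.2.2 u hu] at hqu
  obtain ⟨_, ⟨y, -, hyu, rfl⟩, hly⟩ :=
    exists_lt_of_lt_csSup (by exact ⟨l u, u, hu, le_rfl, rfl⟩) hqu
  refine ⟨u - y, sub_nonneg.mpr hyu, ?_⟩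
  rw [map_sub]
  linarith

theorem exists_le_mem_ker_of_apply_div_nonneg (w : X) {v : X} (hv : 0 ≤ v)
    (hlv : l v ≠ 0) (hsign : 0 ≤ -l w / l v) : ∃ z ∈ LinearMap.ker l, w ≤ z := by
  refine ⟨w + (-l w / l v) • v, ?_, le_add_of_nonneg_right (smul_nonneg hsign hv)⟩
  rw [LinearMap.mem_ker, map_add, map_smul, smul_eq_mul, div_mul_cancel₀ _ hlv, add_neg_cancel]

theorem isMajorizing_ker {a c : X} (ha : 0 ≤ a) (hla : 0 < l a) (hc : 0 ≤ c)
    (hlc : l c < 0) : IsMajorizing (LinearMap.ker l) := by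
  intro w
  rcases le_or_gt 0 (l w) with hw | hw
  · exact exists_le_mem_ker_of_apply_div_nonneg w hc hlc.ne
      (div_nonneg_of_nonpos (neg_nonpos.mpr hw) hlc.le)
  · exact exists_le_mem_ker_of_apply_div_nonneg w ha hla.ne'
      (div_nonneg (neg_nonneg.mpr hw.le) hla.le)

end Functionals

theorem ker_grothendieck_iff_riesz_subspace (l p : X →ₗ[ℝ] ℝ)
    (hp : IsPosPartOf l p) (hp0 : p ≠ 0) (hn0 : p - l ≠ 0) :
    IsGrothendieckSubspace (LinearMap.ker l) ↔
      IsRieszSubspace (LinearMap.ker l) := by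
  obtain ⟨a, ha, hla⟩ := hp.exists_pos_apply hp0
  obtain ⟨c, hc, hlc⟩ := hp.exists_neg_apply hn0
  exact ⟨fun hG => hG.isRieszSubspace (isMajorizing_ker ha hla hc hlc),
    IsRieszSubspace.isGrothendieckSubspace⟩
end

section
/- The kernel of an order bounded linear functional l on a Riesz space X is a Grothendieck subspace if and only if the kernel of the modulus |l| is a Grothendieck subspace. -/
/-!
Since `x ⊔ y ⊔ 0 + x ⊓ y ⊓ 0 = x + y - med(x, y, 0)`, the kernel of `l` is a Grothendieck
subspace iff `l` kills `med(x, y, 0)` whenever it kills `x` and `y`. Let `m` be positive with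
`|l| ≤ m` on the positive cone, and such that every element of nonzero `m`-mass dominates some
`u ≥ 0` with `l u ≠ 0`; both `l` and `|l|` are such functionals for `m = |l|`. We show that
`ker l` is Grothendieck iff there are no three pairwise disjoint elements of nonzero `m`-mass.

Three such elements give disjoint `u₁, u₂, u₃ ≥ 0` with `l uᵢ ≠ 0`, and then
`x = u₁ / l u₁ - u₂ / l u₂` and `y = u₁ / l u₁ - u₃ / l u₃` lie in `ker l` while
`med(x, y, 0) = u₁ / l u₁` does not.

Conversely, without such a triple, no two disjoint elements that are disjoint from a fixed `b`
of nonzero mass both carry mass. On the elements disjoint from `b`, `m` therefore preserves `⊓`,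
and `l` is a multiple of `m`: for `z = m a • w - m w • a` the disjoint parts `z⁺`, `z⁻` have
equal mass, so both are null. (Without two disjoint elements of nonzero mass, the same holds on
the whole positive cone, with `b = 0`.) If `a`, `b` are disjoint with nonzero mass, every
`w ≥ 0` splits as `w ⊓ N a + (w - N a)⁺ ⊓ N b` plus a remainder of mass `→ 0` (a remainder of
non-vanishing mass would be almost disjoint from `a` and `b`, and can be cut to a disjoint
triple). Hence `l` is the pointwise limit of `c₁ φ_N + c₂ ψ_N` with `φ_N`, `ψ_N` preserving `⊓`
on the positive cone; such functionals commute with `med(·, ·, 0)`, and a Lipschitz estimate for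
the median on `ℝ` passes this to the limit.
-/

variable {X : Type*} [Lattice X] [AddCommGroup X]
  [CovariantClass X X (· + ·) (· ≤ ·)] [Module ℝ X] [PosSMulMono ℝ X]

open Filter Topology

section LatticeGroup

variable {α : Type*} [Lattice α] [AddCommGroup α]

/-- The median of `x`, `y` and `0`. -/
def medianZero (x y : α) : α := x⁺ ⊓ y⁺ - x⁻ ⊓ y⁻

theorem medianZero_neg (x y : α) : medianZero (-x) (-y) = -medianZero x y := by
  simp only [medianZero, posPart_neg, negPart_neg, neg_sub]

theorem inf_eq_zero_of_le_of_le_s3 {a b a' b' : α} (ha' : 0 ≤ a') (hb' : 0 ≤ b') (ha : a' ≤ a)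
    (hb : b' ≤ b) (h : a ⊓ b = 0) : a' ⊓ b' = 0 :=
  le_antisymm (h ▸ inf_le_inf ha hb) (le_inf ha' hb')

variable [AddLeftMono α]

theorem sup_sup_zero_add_inf_inf_zero (x y : α) :
    x ⊔ y ⊔ 0 + x ⊓ y ⊓ 0 = x + y - medianZero x y := by
  have hsup : x ⊔ y ⊔ 0 = x⁺ ⊔ y⁺ := sup_sup_distrib_right x y 0
  have hinf : x ⊓ y ⊓ 0 = -(x⁻ ⊔ y⁻) := by
    simp only [negPart_def, neg_sup, neg_neg, neg_zero]
    exact inf_inf_distrib_right x y 0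
  rw [hsup, hinf, medianZero]
  linear_combination (norm := abel) inf_add_sup x⁺ y⁺ - inf_add_sup x⁻ y⁻ +
    posPart_sub_negPart x + posPart_sub_negPart y

theorem medianZero_self (x : α) : medianZero x x = x := by
  rw [medianZero, inf_idem, inf_idem, posPart_sub_negPart]

theorem medianZero_zero_right (x : α) : medianZero x 0 = 0 := by
  simp [medianZero, posPart_nonneg, negPart_nonneg]

theorem medianZero_zero_left (x : α) : medianZero 0 x = 0 := by
  simp [medianZero, posPart_nonneg, negPart_nonneg]

theorem posPart_sub_of_inf_eq_zero {p q : α} (h : p ⊓ q = 0) : (p - q)⁺ = p := by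
  have := inf_add_sup p q
  rw [h, zero_add, sup_eq_add_posPart_sub, add_comm p q] at this
  exact add_left_cancel this

theorem negPart_sub_of_inf_eq_zero {p q : α} (h : p ⊓ q = 0) : (p - q)⁻ = q := by
  rw [← posPart_neg, neg_sub, posPart_sub_of_inf_eq_zero (inf_comm p q ▸ h)]

theorem medianZero_sub_of_inf_eq_zero {p q p' q' : α} (h : p ⊓ q = 0) (h' : p' ⊓ q' = 0) :
    medianZero (p - q) (p' - q') = p ⊓ p' - q ⊓ q' := by
  rw [medianZero, posPart_sub_of_inf_eq_zero h, posPart_sub_of_inf_eq_zero h',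
    negPart_sub_of_inf_eq_zero h, negPart_sub_of_inf_eq_zero h']

theorem inf_add_eq_zero {a b c : α} (hb : a ⊓ b = 0) (hc : a ⊓ c = 0) : a ⊓ (b + c) = 0 := by
  have ha0 : 0 ≤ a := hb ▸ inf_le_left
  have hb0 : 0 ≤ b := hb ▸ inf_le_right
  have hc0 : 0 ≤ c := hc ▸ inf_le_right
  refine le_antisymm (hc ▸ le_inf inf_le_left ?_) (le_inf ha0 (add_nonneg hb0 hc0))
  calc a ⊓ (b + c) ≤ (a + c) ⊓ (b + c) := inf_le_inf_right _ (le_add_of_nonneg_right hc0)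
    _ = c := by rw [← inf_add, hb, zero_add]

theorem sum_inf_eq_zero {ι : Type*} (s : Finset ι) (f : ι → α) {b : α} (hb : 0 ≤ b)
    (h : ∀ i ∈ s, f i ⊓ b = 0) : (∑ i ∈ s, f i) ⊓ b = 0 :=
  Finset.sum_induction f (· ⊓ b = 0)
    (fun _ _ h₁ h₂ => by rw [inf_comm] at h₁ h₂ ⊢; exact inf_add_eq_zero h₁ h₂)
    (inf_eq_left.2 hb) h

theorem nsmul_inf_eq_zero {a b : α} (h : a ⊓ b = 0) (n : ℕ) : (n • a) ⊓ b = 0 := by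
  induction n with
  | zero => rw [zero_nsmul]; exact inf_eq_left.2 (h ▸ inf_le_right)
  | succ n ih =>
    rw [succ_nsmul, inf_comm] at *
    exact inf_add_eq_zero ih h

theorem sub_inf_inf_sub_inf (u v : α) : (u - u ⊓ v) ⊓ (v - u ⊓ v) = 0 := by
  rw [← inf_sub, sub_self]

theorem posPart_sub_le {a b : α} (ha : 0 ≤ a) (hb : 0 ≤ b) : (a - b)⁺ ≤ a :=
  (posPart_mono (sub_le_self a hb)).trans_eq (posPart_eq_self.2 ha)

theorem posPart_inf (p q : α) : (p ⊓ q)⁺ = p⁺ ⊓ q⁺ := by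
  let _ := AddCommGroup.toDistribLattice α
  exact sup_inf_right _ _ _

theorem posPart_posPart_sub {c : α} (hc : 0 ≤ c) (x : α) : (x⁺ - c)⁺ = (x - c)⁺ := by
  rw [posPart_def x, posPart_def, posPart_def, sup_sub, sup_assoc, zero_sub,
    sup_comm (-c) 0, sup_eq_left.2 (neg_nonpos.2 hc)]

theorem eq_inf_add_posPart_sub_inf_add_posPart_sub {d : α} (hd : 0 ≤ d) (w c : α) :
    w = w ⊓ c + (w - c)⁺ ⊓ d + (w - (c + d))⁺ := by
  rw [inf_eq_sub_posPart_sub w c, inf_eq_sub_posPart_sub _ d, posPart_posPart_sub hd, sub_sub]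
  abel

theorem nsmul_posPart_sub_nsmul_inf_le {w c : α} (hw : 0 ≤ w) (hc : 0 ≤ c) (n : ℕ) :
    n • ((w - n • c)⁺ ⊓ c) ≤ w := by
  set r : ℕ → α := fun k => (w - k • c)⁺
  have hstep : ∀ k, r k ⊓ c = r k - r (k + 1) := fun k => by
    simp only [r, inf_eq_sub_posPart_sub _ c, posPart_posPart_sub hc, succ_nsmul, sub_sub]
  have hanti : ∀ k, r (k + 1) ≤ r k := fun k =>
    sub_nonneg.1 (hstep k ▸ le_inf (posPart_nonneg _) hc)
  have key : ∀ k, k • (r k ⊓ c) ≤ w - r k := by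
    intro k
    induction k with
    | zero => simp [r, posPart_eq_self.2 hw]
    | succ k ih =>
      calc (k + 1) • (r (k + 1) ⊓ c) = k • (r (k + 1) ⊓ c) + r (k + 1) ⊓ c := succ_nsmul _ _
        _ ≤ k • (r k ⊓ c) + r k ⊓ c := by
          have := inf_le_inf_right c (hanti k)
          exact add_le_add (nsmul_le_nsmul_right this k) this
        _ ≤ (w - r k) + (r k - r (k + 1)) := add_le_add ih (hstep k).le
        _ = w - r (k + 1) := by abel
  exact (key n).trans (sub_le_self w (posPart_nonneg _))

end LatticeGroup

section OrderedModule

variable {𝕜 E : Type*} [Field 𝕜] [LinearOrder 𝕜] [IsStrictOrderedRing 𝕜]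
  [Lattice E] [AddCommGroup E] [Module 𝕜 E] [PosSMulMono 𝕜 E] {c : 𝕜}

theorem smul_inf_of_nonneg (hc : 0 ≤ c) (a b : E) : c • (a ⊓ b) = c • a ⊓ c • b := by
  rcases hc.eq_or_lt with rfl | hc
  · simp
  · exact (OrderIso.smulRight hc).map_inf a b

theorem smul_sup_of_nonneg (hc : 0 ≤ c) (a b : E) : c • (a ⊔ b) = c • a ⊔ c • b := by
  rcases hc.eq_or_lt with rfl | hc
  · simp
  · exact (OrderIso.smulRight hc).map_sup a b

theorem posPart_smul_of_nonneg (hc : 0 ≤ c) (a : E) : (c • a)⁺ = c • a⁺ := by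
  rw [posPart_def, posPart_def, smul_sup_of_nonneg hc, smul_zero]

theorem negPart_smul_of_nonneg (hc : 0 ≤ c) (a : E) : (c • a)⁻ = c • a⁻ := by
  rw [← posPart_neg, ← smul_neg, posPart_smul_of_nonneg hc, posPart_neg]

theorem medianZero_smul (c : 𝕜) (x y : E) : medianZero (c • x) (c • y) = c • medianZero x y := by
  have key : ∀ c : 𝕜, 0 ≤ c → medianZero (c • x) (c • y) = c • medianZero x y := fun c hc => by
    rw [medianZero, medianZero, posPart_smul_of_nonneg hc, posPart_smul_of_nonneg hc,
      negPart_smul_of_nonneg hc, negPart_smul_of_nonneg hc, ← smul_inf_of_nonneg hc,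
      ← smul_inf_of_nonneg hc, smul_sub]
  rcases le_total 0 c with hc | hc
  · exact key c hc
  · have := key (-c) (neg_nonneg.2 hc)
    rwa [neg_smul, neg_smul, medianZero_neg, neg_smul, neg_inj] at this

variable [AddLeftMono E]

theorem smul_inf_eq_zero_s3 (hc : 0 ≤ c) {a b : E} (h : a ⊓ b = 0) : (c • a) ⊓ b = 0 := by
  have ha : 0 ≤ a := h ▸ inf_le_left
  have hb : 0 ≤ b := h ▸ inf_le_right
  have hmono : ∀ {s t : 𝕜} {v : E}, s ≤ t → 0 ≤ v → s • v ≤ t • v := fun hst hv =>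
    sub_nonneg.1 (by rw [← sub_smul]; exact smul_nonneg (sub_nonneg.2 hst) hv)
  have hT : 0 ≤ max c 1 := le_max_of_le_right zero_le_one
  refine le_antisymm ?_ (le_inf (smul_nonneg hc ha) hb)
  calc c • a ⊓ b ≤ max c 1 • a ⊓ max c 1 • b :=
        inf_le_inf (hmono (le_max_left c 1) ha)
          ((one_smul 𝕜 b).ge.trans (hmono (le_max_right c 1) hb))
    _ = 0 := by rw [← smul_inf_of_nonneg hT, h, smul_zero]

theorem posPart_sum_smul {ι : Type*} [Fintype ι] {u : ι → E}
    (hu : Pairwise fun i j => u i ⊓ u j = 0) (hu0 : ∀ i, 0 ≤ u i) (c : ι → 𝕜) :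
    (∑ i, c i • u i)⁺ = ∑ i, (c i)⁺ • u i := by
  have hsplit : ∑ i, c i • u i = ∑ i, (c i)⁺ • u i - ∑ i, (c i)⁻ • u i := by
    rw [← Finset.sum_sub_distrib]
    simp only [← sub_smul, posPart_sub_negPart]
  have hterm : ∀ i j, ((c i)⁺ • u i) ⊓ ((c j)⁻ • u j) = 0 := by
    intro i j
    rcases eq_or_ne i j with rfl | hij
    · rcases le_total (c i) 0 with h | h
      · rw [posPart_eq_zero.2 h, zero_smul]
        exact inf_eq_left.2 (smul_nonneg (negPart_nonneg _) (hu0 i))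
      · rw [negPart_eq_zero.2 h, zero_smul]
        exact inf_eq_right.2 (smul_nonneg (posPart_nonneg _) (hu0 i))
    · rw [inf_comm]
      refine smul_inf_eq_zero_s3 (negPart_nonneg _) ?_
      rw [inf_comm]
      exact smul_inf_eq_zero_s3 (posPart_nonneg _) (hu hij)
  rw [hsplit, posPart_sub_of_inf_eq_zero]
  refine sum_inf_eq_zero _ _ (Finset.sum_nonneg fun j _ => smul_nonneg (negPart_nonneg _) (hu0 j))
    fun i _ => ?_
  rw [inf_comm]
  exact sum_inf_eq_zero _ _ (smul_nonneg (posPart_nonneg _) (hu0 i))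
    fun j _ => by rw [inf_comm]; exact hterm i j

theorem medianZero_sum_smul {ι : Type*} [Fintype ι] {u : ι → E}
    (hu : Pairwise fun i j => u i ⊓ u j = 0) (hu0 : ∀ i, 0 ≤ u i) (c d : ι → 𝕜) :
    medianZero (∑ i, c i • u i) (∑ i, d i • u i) = ∑ i, medianZero (c i) (d i) • u i := by
  have hneg : ∀ c : ι → 𝕜, -∑ i, c i • u i = ∑ i, (-c i) • u i := fun c => by
    simp only [neg_smul, Finset.sum_neg_distrib]
  have hinf : ∀ c d : ι → 𝕜, (∑ i, c i • u i) ⊓ (∑ i, d i • u i) = ∑ i, (c i ⊓ d i) • u i :=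
    fun c d => by
      rw [inf_eq_sub_posPart_sub, ← Finset.sum_sub_distrib]
      simp only [← sub_smul]
      rw [posPart_sum_smul hu hu0, ← Finset.sum_sub_distrib]
      simp only [← sub_smul, ← inf_eq_sub_posPart_sub]
  rw [medianZero, posPart_sum_smul hu hu0, posPart_sum_smul hu hu0, ← posPart_neg, ← posPart_neg,
    hneg, hneg, posPart_sum_smul hu hu0, posPart_sum_smul hu hu0, hinf, hinf,
    ← Finset.sum_sub_distrib]
  simp only [← sub_smul, posPart_neg, medianZero]

end OrderedModule

theorem abs_medianZero_sub_medianZero_le (s t s' t' : ℝ) :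
    |medianZero s t - medianZero s' t'| ≤ 2 * (|s - s'| + |t - t'|) := by
  have hinf : ∀ a b a' b' : ℝ, |a ⊓ b - a' ⊓ b'| ≤ |a - a'| + |b - b'| := fun a b a' b' =>
    (abs_min_sub_min_le_max a b a' b').trans (max_le_add_of_nonneg (abs_nonneg _) (abs_nonneg _))
  have hpos : ∀ a a' : ℝ, |a⁺ - a'⁺| ≤ |a - a'| := fun a a' => abs_sup_sub_sup_le_abs a a' 0
  have hneg : ∀ a a' : ℝ, |a⁻ - a'⁻| ≤ |a - a'| := fun a a' => by
    simpa [abs_sub_comm, neg_add_eq_sub] using hpos (-a) (-a')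
  have hsplit : medianZero s t - medianZero s' t' =
      (s⁺ ⊓ t⁺ - s'⁺ ⊓ t'⁺) - (s⁻ ⊓ t⁻ - s'⁻ ⊓ t'⁻) := by
    rw [medianZero, medianZero]; ring
  rw [hsplit]
  refine (abs_sub _ _).trans ?_
  linarith [hinf s⁺ t⁺ s'⁺ t'⁺, hinf s⁻ t⁻ s'⁻ t'⁻, hpos s s', hpos t t', hneg s s', hneg t t']

theorem abs_mul_medianZero_add_mul_medianZero_le (a b s s' t t' : ℝ) :
    |a * medianZero s s' + b * medianZero t t'| ≤ 2 * (|a * s + b * t| + |a * s' + b * t'|) := by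
  have h := abs_medianZero_sub_medianZero_le (b * t) (b * t') (-(a * s)) (-(a * s'))
  rw [medianZero_neg, sub_neg_eq_add, sub_neg_eq_add, sub_neg_eq_add] at h
  rw [← smul_eq_mul a, ← smul_eq_mul b, ← medianZero_smul, ← medianZero_smul]
  simpa only [smul_eq_mul, add_comm (medianZero (b * t) _), add_comm (b * _)] using h

section PreservesInf

variable {α : Type*} [Lattice α] [AddCommGroup α] [AddLeftMono α]

def PreservesInfOfNonneg (f : α → ℝ) : Prop :=
  f 0 = 0 ∧ ∀ w z, 0 ≤ w → 0 ≤ z → f (w ⊓ z) = f w ⊓ f z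

theorem PreservesInfOfNonneg.map_inf_sub_map_inf {f : α → ℝ} (hf : PreservesInfOfNonneg f)
    (x y : α) : f (x⁺ ⊓ y⁺) - f (x⁻ ⊓ y⁻) = medianZero (f x⁺ - f x⁻) (f y⁺ - f y⁻) := by
  have hdisj : ∀ z : α, f z⁺ ⊓ f z⁻ = 0 := fun z => by
    rw [← hf.2 _ _ (posPart_nonneg z) (negPart_nonneg z), posPart_inf_negPart_eq_zero, hf.1]
  rw [medianZero_sub_of_inf_eq_zero (hdisj x) (hdisj y),
    hf.2 _ _ (posPart_nonneg x) (posPart_nonneg y), hf.2 _ _ (negPart_nonneg x) (negPart_nonneg y)]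

theorem PreservesInfOfNonneg.comp_posPart_sub {f : α → ℝ} (hf : PreservesInfOfNonneg f) {c : α}
    (hc : 0 ≤ c) : PreservesInfOfNonneg fun w => f (w - c)⁺ := by
  refine ⟨?_, fun w z _ _ => ?_⟩
  · beta_reduce
    rw [zero_sub, posPart_eq_zero.2 (neg_nonpos.2 hc), hf.1]
  · beta_reduce
    rw [inf_sub, posPart_inf, hf.2 _ _ (posPart_nonneg _) (posPart_nonneg _)]

theorem map_medianZero_eq_zero_of_tendsto {l : α →+ ℝ} {a b : ℝ} {φ ψ : ℕ → α → ℝ}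
    (hφ : ∀ N, PreservesInfOfNonneg (φ N)) (hψ : ∀ N, PreservesInfOfNonneg (ψ N))
    (hlim : ∀ w, 0 ≤ w → Tendsto (fun N => a * φ N w + b * ψ N w) atTop (𝓝 (l w)))
    {x y : α} (hx : l x = 0) (hy : l y = 0) : l (medianZero x y) = 0 := by
  set g : α → ℕ → ℝ := fun w N => a * φ N w + b * ψ N w
  have hpart : ∀ z, l z = 0 → Tendsto (fun N => g z⁺ N - g z⁻ N) atTop (𝓝 0) := fun z hz => by
    simpa [← map_sub, posPart_sub_negPart, hz] using
      (hlim _ (posPart_nonneg z)).sub (hlim _ (negPart_nonneg z))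
  have hbound : ∀ N, |g (x⁺ ⊓ y⁺) N - g (x⁻ ⊓ y⁻) N| ≤
      2 * (|g x⁺ N - g x⁻ N| + |g y⁺ N - g y⁻ N|) := fun N => by
    have h := abs_mul_medianZero_add_mul_medianZero_le a b (φ N x⁺ - φ N x⁻)
      (φ N y⁺ - φ N y⁻) (ψ N x⁺ - ψ N x⁻) (ψ N y⁺ - ψ N y⁻)
    rw [← (hφ N).map_inf_sub_map_inf, ← (hψ N).map_inf_sub_map_inf] at h
    convert h using 2 <;> simp only [g] <;> ring_nf
  have hzero : Tendsto (fun N => g (x⁺ ⊓ y⁺) N - g (x⁻ ⊓ y⁻) N) atTop (𝓝 0) := by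
    refine squeeze_zero_norm hbound ?_
    simpa using (((hpart x hx).abs).add (hpart y hy).abs).const_mul 2
  have hlimit := (hlim _ (le_inf (posPart_nonneg x) (posPart_nonneg y))).sub
    (hlim _ (le_inf (negPart_nonneg x) (negPart_nonneg y)))
  rw [medianZero, map_sub]
  exact tendsto_nhds_unique hlimit hzero

end PreservesInf

section Functional

variable {E : Type*} [Lattice E] [AddCommGroup E] [Module ℝ E] {l m : E →ₗ[ℝ] ℝ}

theorem map_eq_zero_of_abs_le (hl : ∀ w, 0 ≤ w → |l w| ≤ m w) {w : E} (hw : 0 ≤ w)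
    (h : m w = 0) : l w = 0 :=
  abs_nonpos_iff.1 (h ▸ hl w hw)

/-- Disjointness `a ⊓ b = 0` already forces `0 ≤ a` and `0 ≤ b`. -/
def HasDisjointTriple (m : E →ₗ[ℝ] ℝ) : Prop :=
  ∃ a b c : E, a ⊓ b = 0 ∧ a ⊓ c = 0 ∧ b ⊓ c = 0 ∧ m a ≠ 0 ∧ m b ≠ 0 ∧ m c ≠ 0

def NoDisjointPairOff (m : E →ₗ[ℝ] ℝ) (b : E) : Prop :=
  ∀ w z : E, w ⊓ b = 0 → z ⊓ b = 0 → w ⊓ z = 0 → m w = 0 ∨ m z = 0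

theorem noDisjointPairOff_of_not_hasDisjointTriple (hS : ¬HasDisjointTriple m) {b : E}
    (hb : m b ≠ 0) : NoDisjointPairOff m b := fun w z hw hz hwz => by
  by_contra! h
  exact hS ⟨w, z, b, hwz, hw, hz, h.1, h.2, hb⟩

variable [AddLeftMono E]

theorem isGrothendieckSubspace_ker_iff :
    IsGrothendieckSubspace (LinearMap.ker l) ↔
      ∀ x, l x = 0 → ∀ y, l y = 0 → l (medianZero x y) = 0 := by
  refine forall₂_congr fun x hx => forall₂_congr fun y hy => ?_
  rw [LinearMap.mem_ker] at hx hy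
  rw [LinearMap.mem_ker, sup_sup_zero_add_inf_inf_zero, map_sub, map_add, hx, hy, zero_add,
    zero_sub, neg_eq_zero]

theorem IsPositive.monotone_s3 (hm : IsPositive m) : Monotone m := fun a b h => by
  simpa [sub_nonneg] using hm (b - a) (sub_nonneg.2 h)

theorem map_inf_of_noDisjointPairOff (hm : IsPositive m) {b : E} (H : NoDisjointPairOff m b)
    {z₁ z₂ : E} (h₁ : z₁ ⊓ b = 0) (h₂ : z₂ ⊓ b = 0) : m (z₁ ⊓ z₂) = m z₁ ⊓ m z₂ := by
  have hb : 0 ≤ b := h₁ ▸ inf_le_right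
  have hz₁ : 0 ≤ z₁ := h₁ ▸ inf_le_left
  have hz₂ : 0 ≤ z₂ := h₂ ▸ inf_le_left
  have he₁ : (z₁ - z₂)⁺ ⊓ b = 0 :=
    inf_eq_zero_of_le_of_le_s3 (posPart_nonneg _) hb (posPart_sub_le hz₁ hz₂) le_rfl h₁
  have he₂ : (z₂ - z₁)⁺ ⊓ b = 0 :=
    inf_eq_zero_of_le_of_le_s3 (posPart_nonneg _) hb (posPart_sub_le hz₂ hz₁) le_rfl h₂
  have hdisj : (z₁ - z₂)⁺ ⊓ (z₂ - z₁)⁺ = 0 := by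
    rw [← neg_sub z₁ z₂, posPart_neg]
    exact posPart_inf_negPart_eq_zero _
  have hnull : m (z₁ - z₂)⁺ ⊓ m (z₂ - z₁)⁺ = 0 := by
    rcases H _ _ he₁ he₂ hdisj with h | h <;> rw [h]
    · exact inf_eq_left.2 (hm _ (posPart_nonneg _))
    · exact inf_eq_right.2 (hm _ (posPart_nonneg _))
  have hsplit : ∀ u v : E, m u = m (u ⊓ v) + m (u - v)⁺ := fun u v => by
    rw [← map_add, inf_eq_sub_posPart_sub, sub_add_cancel]
  rw [hsplit z₁ z₂, hsplit z₂ z₁, inf_comm z₂ z₁, ← add_inf, hnull, add_zero]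

theorem preservesInfOfNonneg_of_noDisjointPairOff_zero (hm : IsPositive m)
    (H : NoDisjointPairOff m 0) : PreservesInfOfNonneg m :=
  ⟨map_zero m, fun _ _ hw hz =>
    map_inf_of_noDisjointPairOff hm H (inf_eq_right.2 hw) (inf_eq_right.2 hz)⟩

theorem preservesInfOfNonneg_map_inf (hm : IsPositive m) {b c : E} (H : NoDisjointPairOff m b)
    (hc : c ⊓ b = 0) : PreservesInfOfNonneg fun w => m (w ⊓ c) := by
  have hc0 : 0 ≤ c := hc ▸ inf_le_left
  have hloc : ∀ w, 0 ≤ w → w ⊓ c ⊓ b = 0 := fun w hw =>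
    inf_eq_zero_of_le_of_le_s3 (le_inf hw hc0) (hc ▸ inf_le_right) inf_le_right le_rfl hc
  refine ⟨by simp [inf_eq_left.2 hc0], fun w z hw hz => ?_⟩
  beta_reduce
  rw [inf_inf_distrib_right, map_inf_of_noDisjointPairOff hm H (hloc w hw) (hloc z hz)]

theorem hasDisjointTriple_of_map_inf_lt (hm : IsPositive m) {a b h : E} (hab : a ⊓ b = 0)
    (hh : 0 ≤ h) (ha : m (h ⊓ (a + b)) < m a) (hb : m (h ⊓ (a + b)) < m b)
    (hh' : m (h ⊓ (a + b)) < m h) : HasDisjointTriple m := by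
  have ha0 : 0 ≤ a := hab ▸ inf_le_left
  have hb0 : 0 ≤ b := hab ▸ inf_le_right
  set d := h ⊓ (a + b)
  set c := a + b - d
  have hd0 : 0 ≤ d := le_inf hh (add_nonneg ha0 hb0)
  have hc0 : 0 ≤ c := sub_nonneg.2 inf_le_right
  have hh0 : 0 ≤ h - d := sub_nonneg.2 inf_le_left
  have hhc : (h - d) ⊓ c = 0 := sub_inf_inf_sub_inf h (a + b)
  have hlow : ∀ e, e ≤ a + b → m e - m d ≤ m (e ⊓ c) := fun e he => by
    rw [← map_sub]
    exact hm.monotone_s3 (le_inf (sub_le_self e hd0) (sub_le_sub_right he d))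
  refine ⟨h - d, a ⊓ c, b ⊓ c,
    inf_eq_zero_of_le_of_le_s3 hh0 (le_inf ha0 hc0) le_rfl inf_le_right hhc,
    inf_eq_zero_of_le_of_le_s3 hh0 (le_inf hb0 hc0) le_rfl inf_le_right hhc,
    inf_eq_zero_of_le_of_le_s3 (le_inf ha0 hc0) (le_inf hb0 hc0) inf_le_left inf_le_left hab,
    ?_, ?_, ?_⟩
  · rw [map_sub]
    exact (sub_pos.2 hh').ne'
  · exact (sub_pos.2 ha |>.trans_le (hlow a (le_add_of_nonneg_right hb0))).ne'
  · exact (sub_pos.2 hb |>.trans_le (hlow b (le_add_of_nonneg_left ha0))).ne'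

theorem tendsto_map_posPart_sub_nsmul (hm : IsPositive m) (hS : ¬HasDisjointTriple m)
    {a b : E} (hab : a ⊓ b = 0) (ha : m a ≠ 0) (hb : m b ≠ 0) {w : E} (hw : 0 ≤ w) :
    Tendsto (fun N : ℕ => m (w - N • (a + b))⁺) atTop (𝓝 0) := by
  have ha0 : 0 ≤ a := hab ▸ inf_le_left
  have hb0 : 0 ≤ b := hab ▸ inf_le_right
  refine tendsto_order.2 ⟨fun ε hε => Eventually.of_forall fun N =>
    hε.trans_le (hm _ (posPart_nonneg _)), fun ε hε => ?_⟩
  set δ := min ε (min (m a) (m b))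
  have hδ : 0 < δ := lt_min hε (lt_min ((hm a ha0).lt_of_ne' ha) ((hm b hb0).lt_of_ne' hb))
  filter_upwards [tendsto_natCast_atTop_atTop.eventually_gt_atTop (m w / δ)] with N hN
  set e := (w - N • (a + b))⁺
  have hN0 : 0 < (N : ℝ) := (div_nonneg (hm w hw) hδ.le).trans_lt hN
  have hcount : (N : ℝ) * m (e ⊓ (a + b)) ≤ m w := by
    have := hm.monotone_s3 (nsmul_posPart_sub_nsmul_inf_le hw (add_nonneg ha0 hb0) N)
    rwa [map_nsmul, nsmul_eq_mul] at this
  have hsmall : m (e ⊓ (a + b)) < δ := by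
    rw [div_lt_iff₀ hδ] at hN
    exact (mul_lt_mul_iff_right₀ hN0).1 (hcount.trans_lt hN)
  by_contra! hε'
  exact hS (hasDisjointTriple_of_map_inf_lt hm hab (posPart_nonneg _)
    (hsmall.trans_le ((min_le_right _ _).trans (min_le_left _ _)))
    (hsmall.trans_le ((min_le_right _ _).trans (min_le_right _ _)))
    (hsmall.trans_le ((min_le_left _ _).trans hε')))

theorem tendsto_mul_map_inf_nsmul_add_mul_map (hm : IsPositive m)
    (hl : ∀ w, 0 ≤ w → |l w| ≤ m w) (hS : ¬HasDisjointTriple m) {a b : E} (hab : a ⊓ b = 0)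
    (ha : m a ≠ 0) (hb : m b ≠ 0) {c₁ c₂ : ℝ} (h₁ : ∀ w, w ⊓ b = 0 → l w = c₁ * m w)
    (h₂ : ∀ w, w ⊓ a = 0 → l w = c₂ * m w) {w : E} (hw : 0 ≤ w) :
    Tendsto (fun N : ℕ => c₁ * m (w ⊓ N • a) + c₂ * m ((w - N • a)⁺ ⊓ N • b)) atTop
      (𝓝 (l w)) := by
  have ha0 : 0 ≤ a := hab ▸ inf_le_left
  have hb0 : 0 ≤ b := hab ▸ inf_le_right
  have herr : Tendsto (fun N : ℕ => l (w - N • (a + b))⁺) atTop (𝓝 0) :=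
    squeeze_zero_norm (fun N => hl _ (posPart_nonneg _))
      (tendsto_map_posPart_sub_nsmul hm hS hab ha hb hw)
  have heq : ∀ N : ℕ, c₁ * m (w ⊓ N • a) + c₂ * m ((w - N • a)⁺ ⊓ N • b) =
      l w - l (w - N • (a + b))⁺ := fun N => by
    have hloc₁ : w ⊓ N • a ⊓ b = 0 := inf_eq_zero_of_le_of_le_s3 (le_inf hw (nsmul_nonneg ha0 N))
      hb0 inf_le_right le_rfl (nsmul_inf_eq_zero hab N)
    have hloc₂ : (w - N • a)⁺ ⊓ N • b ⊓ a = 0 := inf_eq_zero_of_le_of_le_s3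
      (le_inf (posPart_nonneg _) (nsmul_nonneg hb0 N)) ha0 inf_le_right le_rfl
      (nsmul_inf_eq_zero (inf_comm a b ▸ hab) N)
    rw [← h₁ _ hloc₁, ← h₂ _ hloc₂, eq_sub_iff_add_eq, ← map_add, ← map_add, nsmul_add,
      ← eq_inf_add_posPart_sub_inf_add_posPart_sub (nsmul_nonneg hb0 N)]
  simpa [heq] using tendsto_const_nhds.sub herr

end Functional

section RieszSpace

variable {E : Type*} [Lattice E] [AddCommGroup E] [AddLeftMono E] [Module ℝ E] [PosSMulMono ℝ E]
  {l m : E →ₗ[ℝ] ℝ}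

theorem map_mul_eq_mul_map_of_noDisjointPairOff (hm : IsPositive m)
    (hl : ∀ w, 0 ≤ w → |l w| ≤ m w) {b : E} (H : NoDisjointPairOff m b) {a w : E}
    (ha : a ⊓ b = 0) (hw : w ⊓ b = 0) : l w * m a = l a * m w := by
  have hb : 0 ≤ b := ha ▸ inf_le_right
  have ha0 : 0 ≤ a := ha ▸ inf_le_left
  have hw0 : 0 ≤ w := hw ▸ inf_le_left
  set z := m a • w - m w • a with hz
  have hpos : z⁺ ⊓ b = 0 :=
    inf_eq_zero_of_le_of_le_s3 (posPart_nonneg z) hb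
      (posPart_sub_le (smul_nonneg (hm a ha0) hw0) (smul_nonneg (hm w hw0) ha0)) le_rfl
      (smul_inf_eq_zero_s3 (hm a ha0) hw)
  have hneg : z⁻ ⊓ b = 0 := by
    rw [← posPart_neg, hz, neg_sub]
    exact inf_eq_zero_of_le_of_le_s3 (posPart_nonneg _) hb
      (posPart_sub_le (smul_nonneg (hm w hw0) ha0) (smul_nonneg (hm a ha0) hw0)) le_rfl
      (smul_inf_eq_zero_s3 (hm w hw0) ha)
  have hmz : m z⁺ = m z⁻ := by
    have : m z = 0 := by simp [hz, mul_comm]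
    rwa [← posPart_sub_negPart z, map_sub, sub_eq_zero] at this
  have hnull : m z⁺ = 0 ∧ m z⁻ = 0 := by
    rcases H _ _ hpos hneg (posPart_inf_negPart_eq_zero z) with h | h
    · exact ⟨h, hmz.symm.trans h⟩
    · exact ⟨hmz.trans h, h⟩
  have hlz : l z = 0 := by
    rw [← posPart_sub_negPart z, map_sub, map_eq_zero_of_abs_le hl (posPart_nonneg z) hnull.1,
      map_eq_zero_of_abs_le hl (negPart_nonneg z) hnull.2, sub_zero]
  simp only [hz, map_sub, map_smul, smul_eq_mul] at hlz
  linarith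

theorem exists_map_eq_mul_of_noDisjointPairOff (hm : IsPositive m)
    (hl : ∀ w, 0 ≤ w → |l w| ≤ m w) {b : E} (H : NoDisjointPairOff m b) :
    ∃ c : ℝ, ∀ w, w ⊓ b = 0 → l w = c * m w := by
  by_cases h : ∃ a, a ⊓ b = 0 ∧ m a ≠ 0
  · obtain ⟨a, ha, hma⟩ := h
    refine ⟨l a / m a, fun w hw => ?_⟩
    rw [div_mul_eq_mul_div, eq_div_iff hma]
    exact map_mul_eq_mul_map_of_noDisjointPairOff hm hl H ha hw
  · refine ⟨0, fun w hw => ?_⟩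
    rw [zero_mul]
    exact map_eq_zero_of_abs_le hl (hw ▸ inf_le_left) (not_not.1 fun hmw => h ⟨w, hw, hmw⟩)

theorem isGrothendieckSubspace_ker_of_not_hasDisjointTriple (hm : IsPositive m)
    (hl : ∀ w, 0 ≤ w → |l w| ≤ m w) (hS : ¬HasDisjointTriple m) :
    IsGrothendieckSubspace (LinearMap.ker l) := by
  rw [isGrothendieckSubspace_ker_iff]
  intro x hx y hy
  by_cases hpair : ∃ a b : E, a ⊓ b = 0 ∧ m a ≠ 0 ∧ m b ≠ 0
  · obtain ⟨a, b, hab, ha, hb⟩ := hpair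
    have Ha := noDisjointPairOff_of_not_hasDisjointTriple hS ha
    have Hb := noDisjointPairOff_of_not_hasDisjointTriple hS hb
    obtain ⟨c₁, h₁⟩ := exists_map_eq_mul_of_noDisjointPairOff hm hl Hb
    obtain ⟨c₂, h₂⟩ := exists_map_eq_mul_of_noDisjointPairOff hm hl Ha
    exact map_medianZero_eq_zero_of_tendsto (l := l.toAddMonoidHom)
      (fun N => preservesInfOfNonneg_map_inf hm Hb (nsmul_inf_eq_zero hab N))
      (fun N => (preservesInfOfNonneg_map_inf hm Ha (nsmul_inf_eq_zero (inf_comm a b ▸ hab) N)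
        ).comp_posPart_sub (nsmul_nonneg (hab ▸ inf_le_left) N))
      (fun w hw => tendsto_mul_map_inf_nsmul_add_mul_map hm hl hS hab ha hb h₁ h₂ hw) hx hy
  · have H : NoDisjointPairOff m 0 := fun w z _ _ hwz => by
      by_contra! h
      exact hpair ⟨w, z, hwz, h⟩
    obtain ⟨c, hc⟩ := exists_map_eq_mul_of_noDisjointPairOff hm hl H
    have hφ := preservesInfOfNonneg_of_noDisjointPairOff_zero hm H
    have hlim : ∀ w, 0 ≤ w → Tendsto (fun _ : ℕ => c * m w + 0 * m w) atTop (𝓝 (l w)) :=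
      fun w hw => by
        rw [hc w (inf_eq_right.2 hw), zero_mul, add_zero]
        exact tendsto_const_nhds
    exact map_medianZero_eq_zero_of_tendsto (l := l.toAddMonoidHom) (fun _ => hφ) (fun _ => hφ)
      hlim hx hy

theorem not_isGrothendieckSubspace_ker_of_hasDisjointTriple
    (hsupp : ∀ a, 0 ≤ a → m a ≠ 0 → ∃ u, 0 ≤ u ∧ u ≤ a ∧ l u ≠ 0) (hT : HasDisjointTriple m) :
    ¬IsGrothendieckSubspace (LinearMap.ker l) := by
  obtain ⟨a₁, a₂, a₃, h₁₂, h₁₃, h₂₃, hm₁, hm₂, hm₃⟩ := hT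
  obtain ⟨u₁, hu₁, hu₁a, hl₁⟩ := hsupp a₁ (h₁₂ ▸ inf_le_left) hm₁
  obtain ⟨u₂, hu₂, hu₂a, hl₂⟩ := hsupp a₂ (h₁₂ ▸ inf_le_right) hm₂
  obtain ⟨u₃, hu₃, hu₃a, hl₃⟩ := hsupp a₃ (h₁₃ ▸ inf_le_right) hm₃
  set u : Fin 3 → E := ![u₁, u₂, u₃]
  have hu0 : ∀ i, 0 ≤ u i := by
    intro i; fin_cases i <;> assumption
  have hu : Pairwise fun i j => u i ⊓ u j = 0 := by
    have d₁₂ := inf_eq_zero_of_le_of_le_s3 hu₁ hu₂ hu₁a hu₂a h₁₂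
    have d₁₃ := inf_eq_zero_of_le_of_le_s3 hu₁ hu₃ hu₁a hu₃a h₁₃
    have d₂₃ := inf_eq_zero_of_le_of_le_s3 hu₂ hu₃ hu₂a hu₃a h₂₃
    intro i j hij
    fin_cases i <;> fin_cases j <;> simp_all [u, inf_comm]
  -- `medianZero (c i) (d i)` is `(l u₁)⁻¹` for `i = 0` and vanishes otherwise.
  set c : Fin 3 → ℝ := ![(l u₁)⁻¹, -(l u₂)⁻¹, 0]
  set d : Fin 3 → ℝ := ![(l u₁)⁻¹, 0, -(l u₃)⁻¹]
  rw [isGrothendieckSubspace_ker_iff]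
  intro H
  have hmed := H (∑ i, c i • u i) (by simp [Fin.sum_univ_three, c, u, hl₁, hl₂])
    (∑ i, d i • u i) (by simp [Fin.sum_univ_three, d, u, hl₁, hl₃])
  rw [medianZero_sum_smul hu hu0] at hmed
  simp [Fin.sum_univ_three, c, d, u, medianZero_self, medianZero_zero_left, medianZero_zero_right,
    hl₁] at hmed

theorem isGrothendieckSubspace_ker_iff_not_hasDisjointTriple (hm : IsPositive m)
    (hl : ∀ w, 0 ≤ w → |l w| ≤ m w)
    (hsupp : ∀ a, 0 ≤ a → m a ≠ 0 → ∃ u, 0 ≤ u ∧ u ≤ a ∧ l u ≠ 0) :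
    IsGrothendieckSubspace (LinearMap.ker l) ↔ ¬HasDisjointTriple m :=
  ⟨fun hG hT => not_isGrothendieckSubspace_ker_of_hasDisjointTriple hsupp hT hG,
    isGrothendieckSubspace_ker_of_not_hasDisjointTriple hm hl⟩

end RieszSpace

section PosPart

variable {E : Type*} [Lattice E] [AddCommGroup E] [Module ℝ E] {l p : E →ₗ[ℝ] ℝ}

theorem IsPosPartOf.isPositive_modulus (hp : IsPosPartOf l p) : IsPositive (p + (p - l)) :=
  fun w hw => add_nonneg (hp.1 w hw) (hp.2.1 w hw)

theorem IsPosPartOf.abs_le_modulus (hp : IsPosPartOf l p) (w : E) (hw : 0 ≤ w) :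
    |l w| ≤ (p + (p - l)) w := by
  have h₁ := hp.1 w hw
  have h₂ := hp.2.1 w hw
  simp only [LinearMap.add_apply, LinearMap.sub_apply] at h₂ ⊢
  rw [abs_le]
  constructor <;> linarith

theorem IsPosPartOf.exists_map_ne_zero (hp : IsPosPartOf l p) {a : E} (ha : 0 ≤ a)
    (h : (p + (p - l)) a ≠ 0) : ∃ u, 0 ≤ u ∧ u ≤ a ∧ l u ≠ 0 := by
  by_contra! hl0
  have hset : {r : ℝ | ∃ y, 0 ≤ y ∧ y ≤ a ∧ l y = r} = {0} := by
    ext r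
    constructor
    · rintro ⟨y, hy, hya, rfl⟩
      exact hl0 y hy hya
    · rintro rfl
      exact ⟨0, le_rfl, ha, map_zero l⟩
  have hpa : p a = 0 := by rw [hp.2.2 a ha, hset, csSup_singleton]
  exact h (by simp [hpa, hl0 a ha le_rfl])

end PosPart

theorem ker_grothendieck_iff_ker_modulus_grothendieck (l p : X →ₗ[ℝ] ℝ)
    (hp : IsPosPartOf l p) :
    IsGrothendieckSubspace (LinearMap.ker l) ↔
      IsGrothendieckSubspace (LinearMap.ker (p + (p - l))) := by
  have hm := hp.isPositive_modulus
  rw [isGrothendieckSubspace_ker_iff_not_hasDisjointTriple hm hp.abs_le_modulus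
      fun _ ha h => hp.exists_map_ne_zero ha h,
    isGrothendieckSubspace_ker_iff_not_hasDisjointTriple hm
      (fun w hw => (abs_of_nonneg (hm w hw)).le) fun a ha h => ⟨a, ha, le_rfl, h⟩]
end

section
/- If f and g are Riesz homomorphisms from a Riesz space X to ℝ, then the kernel of f + g is a Grothendieck subspace of X. -/
variable {X : Type*} [Lattice X] [AddCommGroup X]
  [CovariantClass X X (· + ·) (· ≤ ·)] [Module ℝ X] [PosSMulMono ℝ X]

theorem ker_sum_riesz_homs_grothendieck (f g : X →ₗ[ℝ] ℝ)
    (hf : IsRieszHom f) (hg : IsRieszHom g) :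
    IsGrothendieckSubspace (LinearMap.ker (f + g)) := by
  have finf : ∀ a b : X, f (a ⊓ b) = f a ⊓ f b := by
    intro a b
    have : a ⊓ b = -((-a) ⊔ (-b)) := by rw [neg_sup, neg_neg, neg_neg]
    rw [this, map_neg, hf, map_neg, map_neg, neg_sup, neg_neg, neg_neg]
  have ginf : ∀ a b : X, g (a ⊓ b) = g a ⊓ g b := by
    intro a b
    have : a ⊓ b = -((-a) ⊔ (-b)) := by rw [neg_sup, neg_neg, neg_neg]
    rw [this, map_neg, hg, map_neg, map_neg, neg_sup, neg_neg, neg_neg]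
  intro x hx y hy
  simp only [LinearMap.mem_ker, LinearMap.add_apply] at hx hy ⊢
  rw [map_add, map_add, hf, hf, finf, finf, hg, hg, ginf, ginf, map_zero, map_zero]
  have hgx : g x = -(f x) := by linarith
  have hgy : g y = -(f y) := by linarith
  rw [hgx, hgy]
  have h1 : (-(f x)) ⊔ (-(f y)) ⊔ 0 = -((f x) ⊓ (f y) ⊓ 0) := by
    rw [neg_inf, neg_inf, neg_zero]
  have h2 : (-(f x)) ⊓ (-(f y)) ⊓ 0 = -((f x) ⊔ (f y) ⊔ 0) := by
    rw [neg_sup, neg_sup, neg_zero]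
  rw [h1, h2]; ring
end

section
/- If l is a nonzero positive linear functional on a Riesz space X whose kernel is a Riesz subspace, then l is a Riesz homomorphism. -/
variable {X : Type*} [Lattice X] [AddCommGroup X]
  [CovariantClass X X (· + ·) (· ≤ ·)] [Module ℝ X] [PosSMulMono ℝ X]

theorem positive_ker_riesz_subspace_is_riesz_hom (l : X →ₗ[ℝ] ℝ)
    (hl : IsPositive l) (hl0 : l ≠ 0)
    (hker : IsRieszSubspace (LinearMap.ker l)) : IsRieszHom l := by
  -- monotonicity of l
  have hmono : ∀ a b : X, a ≤ b → l a ≤ l b := by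
    intro a b h
    have := hl (b - a) (sub_nonneg.2 h)
    simpa [sub_nonneg] using this
  -- find e ≥ 0 with l e = 1
  obtain ⟨u, hu⟩ : ∃ u, l u ≠ 0 := by
    by_contra h
    push_neg at h
    exact hl0 (LinearMap.ext fun x => by simp [h x])
  have hc : ∃ c : X, 0 ≤ c ∧ 0 < l c := by
    rcases lt_or_gt_of_ne hu with h | h
    · refine ⟨(-u) ⊔ 0, le_sup_right, lt_of_lt_of_le ?_ (hmono _ _ le_sup_left)⟩
      simpa using neg_pos.2 h
    · exact ⟨u ⊔ 0, le_sup_right, lt_of_lt_of_le h (hmono _ _ le_sup_left)⟩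
  obtain ⟨c, hc0, hlc⟩ := hc
  set e : X := (l c)⁻¹ • c with he
  have he0 : 0 ≤ e := smul_nonneg (inv_nonneg.2 hlc.le) hc0
  have hle : l e = 1 := by
    simp [he, map_smul, inv_mul_cancel₀ hlc.ne']
  -- key: l (x ⊔ 0) = l x ⊔ 0
  have key : ∀ x : X, l (x ⊔ 0) = l x ⊔ 0 := by
    intro x
    set t : ℝ := l x with ht
    set z : X := x - t • e with hz
    have hzker : z ∈ LinearMap.ker l := by
      simp [hz, map_sub, map_smul, hle, ← ht]
    have hzsup : l (z ⊔ 0) = 0 := (hker z hzker 0 (Submodule.zero_mem _)).1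
    -- upper bound
    have hx : x = z + t • e := by simp [hz]
    have hsub : x ⊔ 0 ≤ z ⊔ 0 + (t • e) ⊔ 0 := by
      rw [hx]
      refine sup_le (add_le_add le_sup_left le_sup_left) (add_nonneg le_sup_right le_sup_right)
    have hte : l ((t • e) ⊔ 0) = t ⊔ 0 := by
      rcases le_total 0 t with h | h
      · have : (0:X) ≤ t • e := smul_nonneg h he0
        rw [sup_of_le_left this, map_smul, hle, sup_of_le_left h]
        simp
      · have : t • e ≤ 0 := by
          have h' : (0:X) ≤ (-t) • e := smul_nonneg (neg_nonneg.2 h) he0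
          rw [neg_smul] at h'
          exact neg_nonneg.1 h'
        rw [sup_of_le_right this, sup_of_le_right h, map_zero]
    have hub : l (x ⊔ 0) ≤ t ⊔ 0 := by
      have := hmono _ _ hsub
      rw [map_add, hzsup, hte, zero_add] at this
      exact this
    have hlb : t ⊔ 0 ≤ l (x ⊔ 0) := by
      refine sup_le ?_ ?_
      · exact (hmono _ _ le_sup_left)
      · simpa using hl _ le_sup_right
    exact le_antisymm hub hlb
  -- general case
  intro x y
  have hXeq : x ⊔ y = (x - y) ⊔ 0 + y := by
    rw [sup_add, zero_add, sub_add_cancel]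
  rw [hXeq, map_add, key, map_sub]
  rcases le_total (l y) (l x) with h | h
  · rw [sup_of_le_left (sub_nonneg.2 h), sup_of_le_left h]; ring
  · rw [sup_of_le_right (sub_nonpos.2 h), sup_of_le_right h]; ring
end

section
/- If l is an order bounded linear functional on a Riesz space X whose kernel is a Grothendieck subspace, then either l₊ = 0, or l₋ = 0, or both l₊ and l₋ are Riesz homomorphisms. -/
/-!
Suppose `l₋ ≠ 0`, so that `l t < 0` for some `t ≥ 0`. If `y, s ≥ 0` are disjoint with
`l y = l s > 0`, then `u = y - s` and `v = y + λ t` lie in `ker l` for a suitable `λ ≥ 0`, and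
`v ≥ u ⊔ 0`. The Grothendieck condition for `u, v` reads `v - u⁻ ∈ ker l`, and `u⁻ = s` by
disjointness, so `l s = 0`: a contradiction. Hence `l` is not positive on two disjoint positive
elements, so `l₊`, whose positive values are witnessed by positive values of `l` below, cannot
be positive on both `u⁺` and `u⁻`; this makes `l₊` a Riesz homomorphism. The same argument for
`-l` handles `l₋` when `l₊ ≠ 0`.
-/

variable {X : Type*} [Lattice X] [AddCommGroup X]
  [CovariantClass X X (· + ·) (· ≤ ·)] [Module ℝ X] [PosSMulMono ℝ X]

section

variable {E : Type*} [Lattice E] [AddCommGroup E]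

lemma negPart_sub_of_inf_eq_zero_s14 [AddLeftMono E] {y s : E} (h : y ⊓ s = 0) : (y - s)⁻ = s := by
  rw [negPart_eq_neg_inf_zero, ← sub_self s, ← inf_sub, h, zero_sub, neg_neg]

variable [Module ℝ E]

namespace IsPosPartOf

variable {l p : E →ₗ[ℝ] ℝ}

lemma exists_lt_apply (hp : IsPosPartOf l p) {x : E} (hx : 0 ≤ x) {r : ℝ} (hr : r < p x) :
    ∃ y : E, 0 ≤ y ∧ y ≤ x ∧ r < l y := by
  have hne : {r : ℝ | ∃ y : E, 0 ≤ y ∧ y ≤ x ∧ l y = r}.Nonempty :=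
    ⟨0, 0, le_rfl, hx, map_zero l⟩
  rw [hp.2.2 x hx] at hr
  obtain ⟨_, ⟨y, hy, hyx, rfl⟩, hry⟩ := exists_lt_of_lt_csSup hne hr
  exact ⟨y, hy, hyx, hry⟩

lemma exists_apply_neg [AddLeftMono E] (hp : IsPosPartOf l p) {x : E} (hx : 0 ≤ x)
    (hqx : 0 < (p - l) x) : ∃ y : E, 0 ≤ y ∧ y ≤ x ∧ l y < 0 := by
  obtain ⟨y, hy, hyx, hly⟩ := hp.exists_lt_apply hx (r := l x) (by simpa using hqx)
  exact ⟨x - y, sub_nonneg.mpr hyx, sub_le_self x hy, by rw [map_sub]; linarith⟩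

end IsPosPartOf

variable [AddLeftMono E]

namespace IsPositive

variable {f : E →ₗ[ℝ] ℝ}

lemma exists_apply_pos_of_ne_zero (hf : IsPositive f) (h : f ≠ 0) :
    ∃ x : E, 0 ≤ x ∧ 0 < f x := by
  contrapose! h
  have h0 : ∀ x : E, 0 ≤ x → f x = 0 := fun x hx => (h x hx).antisymm (hf x hx)
  ext x
  rw [← posPart_sub_negPart x, map_sub, h0 _ (posPart_nonneg x), h0 _ (negPart_nonneg x),
    sub_zero, LinearMap.zero_apply]

lemma map_posPart (hf : IsPositive f) {u : E} (h : f u⁺ = 0 ∨ f u⁻ = 0) : f u⁺ = (f u)⁺ := by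
  have hfu : f u = f u⁺ - f u⁻ := by rw [← map_sub, posPart_sub_negPart]
  rcases h with h | h
  · rw [h, eq_comm, posPart_eq_zero]
    linarith [hf _ (negPart_nonneg u)]
  · rw [hfu, h, sub_zero, eq_comm, posPart_eq_self]
    exact hf _ (posPart_nonneg u)

lemma isRieszHom (hf : IsPositive f) (h : ∀ u : E, f u⁺ = 0 ∨ f u⁻ = 0) : IsRieszHom f :=
  fun x y => by
    rw [sup_eq_add_posPart_sub, map_add, hf.map_posPart (h _), map_sub, sup_eq_add_posPart_sub]

end IsPositive

namespace IsGrothendieckSubspace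

variable {H : Submodule ℝ E}

lemma negPart_mem (hH : IsGrothendieckSubspace H) {u v : E} (hu : u ∈ H) (hv : v ∈ H)
    (huv : u ≤ v) (hv0 : 0 ≤ v) : u⁻ ∈ H := by
  have hsup : u ⊔ v ⊔ 0 = v := by rw [sup_eq_right.mpr huv, sup_eq_left.mpr hv0]
  have hinf : u ⊓ v ⊓ 0 = -u⁻ := by
    rw [inf_assoc, inf_eq_right.mpr hv0, negPart_eq_neg_inf_zero, neg_neg]
  have h := hH u hu v hv
  rw [hsup, hinf] at h
  simpa using H.sub_mem hv h

lemma mem_of_inf_eq_zero (hH : IsGrothendieckSubspace H) {y s v : E} (hys : y ⊓ s = 0)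
    (hs : 0 ≤ s) (hsub : y - s ∈ H) (hv : v ∈ H) (hyv : y ≤ v) (hv0 : 0 ≤ v) : s ∈ H :=
  negPart_sub_of_inf_eq_zero_s14 hys ▸ hH.negPart_mem hsub hv ((sub_le_self y hs).trans hyv) hv0

variable [PosSMulMono ℝ E] {l : E →ₗ[ℝ] ℝ}

lemma apply_eq_zero_of_inf_eq_zero (hker : IsGrothendieckSubspace (LinearMap.ker l))
    {t : E} (ht : 0 ≤ t) (hlt : l t < 0) {y s : E} (hy : 0 ≤ y) (hs : 0 ≤ s) (hys : y ⊓ s = 0)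
    (hly : 0 ≤ l y) (hl : l y = l s) : l s = 0 := by
  set v := y + (l y / -l t) • t
  have hyv : y ≤ v := le_add_of_nonneg_right (smul_nonneg (div_nonneg hly (by linarith)) ht)
  have hlv : l v = 0 := by
    simp only [v, map_add, map_smul, smul_eq_mul, div_neg, neg_mul, div_mul_cancel₀ _ hlt.ne,
      add_neg_cancel]
  refine hker.mem_of_inf_eq_zero hys hs ?_ (LinearMap.mem_ker.mpr hlv) hyv (hy.trans hyv)
  rw [LinearMap.mem_ker, map_sub, hl, sub_self]

lemma apply_nonpos_of_inf_eq_zero (hker : IsGrothendieckSubspace (LinearMap.ker l))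
    {t : E} (ht : 0 ≤ t) (hlt : l t < 0) {y s : E} (hy : 0 ≤ y) (hs : 0 ≤ s) (hys : y ⊓ s = 0)
    (hly : 0 < l y) : l s ≤ 0 := by
  by_contra! hls
  wlog hle : l y ≤ l s generalizing y s
  · exact this hs hy (inf_comm s y ▸ hys) hls hly (not_le.mp hle).le
  set s' := (l y / l s) • s
  have hr : 0 ≤ l y / l s := div_nonneg hly.le hls.le
  have hs' : 0 ≤ s' := smul_nonneg hr hs
  have hs's : s' ≤ s := by
    simpa [s', sub_smul] using smul_nonneg (sub_nonneg.mpr ((div_le_one hls).mpr hle)) hs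
  have hys' : y ⊓ s' = 0 := le_antisymm (hys ▸ inf_le_inf_left y hs's) (le_inf hy hs')
  have hls' : l s' = l y := by simp [s', div_mul_cancel₀ _ hls.ne']
  have := hker.apply_eq_zero_of_inf_eq_zero ht hlt hy hs' hys' hly.le hls'.symm
  linarith

lemma isRieszHom_of_isPositive (hker : IsGrothendieckSubspace (LinearMap.ker l))
    {t : E} (ht : 0 ≤ t) (hlt : l t < 0) {f : E →ₗ[ℝ] ℝ} (hf : IsPositive f)
    (hl : ∀ x : E, 0 ≤ x → 0 < f x → ∃ y : E, 0 ≤ y ∧ y ≤ x ∧ 0 < l y) : IsRieszHom f := by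
  refine hf.isRieszHom fun u => ?_
  by_contra! h
  obtain ⟨y, hy, hyu, hly⟩ := hl _ (posPart_nonneg u) ((hf _ (posPart_nonneg u)).lt_of_ne' h.1)
  obtain ⟨s, hs, hsu, hls⟩ := hl _ (negPart_nonneg u) ((hf _ (negPart_nonneg u)).lt_of_ne' h.2)
  have hys : y ⊓ s = 0 :=
    le_antisymm ((posPart_inf_negPart_eq_zero u) ▸ inf_le_inf hyu hsu) (le_inf hy hs)
  exact (hker.apply_nonpos_of_inf_eq_zero ht hlt hy hs hys hly).not_gt hls

end IsGrothendieckSubspace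

end

theorem grothendieck_kernel_trichotomy (l p : X →ₗ[ℝ] ℝ)
    (hp : IsPosPartOf l p)
    (hker : IsGrothendieckSubspace (LinearMap.ker l)) :
    p = 0 ∨ p - l = 0 ∨ (IsRieszHom p ∧ IsRieszHom (p - l)) := by
  by_cases hp0 : p = 0
  · exact Or.inl hp0
  by_cases hq0 : p - l = 0
  · exact Or.inr (Or.inl hq0)
  obtain ⟨wp, hwp, hpw⟩ := hp.1.exists_apply_pos_of_ne_zero hp0
  obtain ⟨tpos, htpos, -, hltpos⟩ := hp.exists_lt_apply hwp hpw
  obtain ⟨wq, hwq, hqw⟩ := hp.2.1.exists_apply_pos_of_ne_zero hq0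
  obtain ⟨tneg, htneg, -, hltneg⟩ := hp.exists_apply_neg hwq hqw
  have hp_riesz : IsRieszHom p :=
    hker.isRieszHom_of_isPositive htneg hltneg hp.1 fun x hx => hp.exists_lt_apply hx
  have hq_riesz : IsRieszHom (p - l) := by
    have hker_neg : IsGrothendieckSubspace (LinearMap.ker (-l)) := by rwa [LinearMap.ker_neg]
    refine hker_neg.isRieszHom_of_isPositive htpos (by simpa using hltpos) hp.2.1
      fun x hx hqx => ?_
    obtain ⟨y, hy, hyx, hly⟩ := hp.exists_apply_neg hx hqx
    exact ⟨y, hy, hyx, by simpa using hly⟩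
  exact Or.inr (Or.inr ⟨hp_riesz, hq_riesz⟩)
end

section
/- In the space C(Q, ℝ) of continuous real functions on a compact Hausdorff space Q, for any q₁, q₂ ∈ Q and λ ≥ 0, the subspace {f ∈ C(Q, ℝ) : f(q₁) = λ·f(q₂)} is a Grothendieck subspace. -/
variable {X : Type*} [Lattice X] [AddCommGroup X]
  [CovariantClass X X (· + ·) (· ≤ ·)] [Module ℝ X] [PosSMulMono ℝ X]

theorem grothendieck_subspace_in_continuous_functions
    (Q : Type*) [TopologicalSpace Q] [CompactSpace Q] [T2Space Q]
    (q₁ q₂ : Q) (lam : ℝ) (hlam : 0 ≤ lam)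
    (H : Submodule ℝ C(Q, ℝ))
    (hH : ∀ f : C(Q, ℝ), f ∈ H ↔ f q₁ = lam * f q₂) :
    IsGrothendieckSubspace H := by
  intro f hf g hg
  rw [hH] at hf hg ⊢
  simp only [ContinuousMap.add_apply, ContinuousMap.sup_apply, ContinuousMap.inf_apply,
    ContinuousMap.zero_apply, hf, hg]
  rw [mul_add, mul_max_of_nonneg _ _ hlam, mul_max_of_nonneg _ _ hlam,
    mul_min_of_nonneg _ _ hlam, mul_min_of_nonneg _ _ hlam, mul_zero]
end
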